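/- Let r ≥ 1, m ≥ 1 be integers, let V be a complex vector space of dimension rm, let w ∈ ⋀^r V, and let 1 ≤ k ≤ m. Then the following are equivalent: (a) for every i with 0 ≤ i ≤ k−1 and every (t_1,…,t_m) ∈ (⋀^r V)^m one has Σ_{S ⊆ M, |S| = i} sgn(σ_S) · w^{∧(m−i)} ∧ t_S = 0 in ⋀^{rm} V; (b) w^{∧(m−k+1)} = 0, where w^{∧j} denotes the j-fold wedge product w ∧ ⋯ ∧ w. -/

import Mathlib

/-!
Taking `i = k - 1` and `t` supported on a fixed `(k-1)`-subset `S₀` collapses the polar sum to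
`± w^(m-k+1) ∧ x₁ ∧ ⋯ ∧ x_(k-1)` for arbitrary `xⱼ ∈ ⋀^r V`. Such products span `⋀^(r(k-1)) V`,
so `w^(m-k+1) ∈ ⋀^(r(m-k+1)) V` annihilates all of `⋀^(r(k-1)) V`; as the wedge pairing into the
top degree `⋀^(rm) V` is nondegenerate, `w^(m-k+1) = 0`. Conversely `w^(m-i)` vanishes for
`i ≤ k - 1` since `m - i ≥ m - k + 1`.
-/

open Module ExteriorAlgebra

/-- The permutation `σ_S` of `Fin m` listing first the complement of `S` in increasing
order, then the elements of `S` in increasing order. -/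
def sigmaPerm {m : ℕ} (S : Finset (Fin m)) : Equiv.Perm (Fin m) :=
  (finCongr (by simp [Finset.card_compl_add_card])).symm.trans <|
    finSumFinEquiv.symm.trans <|
      (Equiv.sumCongr (Sᶜ.orderIsoOfFin rfl).toEquiv (S.orderIsoOfFin rfl).toEquiv).trans <|
        (Equiv.sumComm _ _).trans <|
          (Equiv.sumCongr (Equiv.refl _)
              (Equiv.subtypeEquivRight fun _ => Finset.mem_compl)).trans <|
            Equiv.sumCompl (· ∈ S)

/-- The ordered wedge product `w_S = w_{s_1} ∧ ⋯ ∧ w_{s_k}` for `S = {s_1 < ⋯ < s_k}`,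
with `w_∅ = 1`. -/
noncomputable def wedgeFinset {m : ℕ} {V : Type*} [AddCommGroup V] [Module ℂ V]
    (w : Fin m → ExteriorAlgebra ℂ V) (S : Finset (Fin m)) : ExteriorAlgebra ℂ V :=
  ((S.sort (· ≤ ·)).map w).prod

/-- The `i`-th polar expression `∑_{|S| = i} sgn(σ_S) • w_{M∖S} ∧ t_S`. -/
noncomputable def polarSum {m : ℕ} {V : Type*} [AddCommGroup V] [Module ℂ V] {r : ℕ}
    (w t : Fin m → (⋀[ℂ]^r V : Submodule ℂ (ExteriorAlgebra ℂ V))) (i : ℕ) :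
    ExteriorAlgebra ℂ V :=
  ∑ S ∈ Finset.powersetCard i (Finset.univ : Finset (Fin m)),
    (Equiv.Perm.sign (sigmaPerm S) : ℤ) •
      (wedgeFinset (fun a => (w a : ExteriorAlgebra ℂ V)) Sᶜ *
        wedgeFinset (fun a => (t a : ExteriorAlgebra ℂ V)) S)

open Set.powersetCard in
theorem ExteriorAlgebra.eq_zero_of_forall_mul_exteriorPower_eq_zero {R M I : Type*} [CommRing R]
    [Nontrivial R] [AddCommGroup M] [Module R M] [Fintype I] [LinearOrder I] (b : Basis I R M)
    {p q : ℕ} (hpq : q + p = Fintype.card I) {z : ExteriorAlgebra R M} (hz : z ∈ ⋀[R]^p M)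
    (h : ∀ y ∈ ⋀[R]^q M, z * y = 0) : z = 0 := by
  classical
  set c := (b.exteriorPower p).repr ⟨z, hz⟩
  suffices c = 0 by simpa [c] using this
  ext s
  have hz_eq : z = ∑ t, c t • ιMulti_family R p b t := by
    simpa [c] using congrArg Subtype.val ((b.exteriorPower p).sum_repr ⟨z, hz⟩).symm
  have hdisj : Disjoint s.val (compl hpq s).val := by simp [disjoint_compl_right]
  have key := h _ (exteriorPower.ιMulti_family R q b (compl hpq s)).2
  rw [exteriorPower.ιMulti_family_apply_coe, hz_eq, Finset.sum_mul,
    Finset.sum_eq_single s] at key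
  -- multiplying by the basis vector of the complementary index set isolates the coefficient of `s`
  · rw [smul_mul_assoc, ιMulti_family_mul_of_disjoint _ _ _ _ hdisj,
      ← exteriorPower.ιMulti_family_apply_coe, ← exteriorPower.coe_basis] at key
    have := congrArg (fun y => (b.exteriorPower (p + q)).repr y (disjUnion hdisj))
      (Subtype.ext key : c s • (permOfDisjoint hdisj).sign • _ = (0 : ⋀[R]^(p + q) M))
    simpa [smul_eq_zero_iff_eq] using this
  · intro t _ hts
    rw [smul_mul_assoc, ιMulti_family_mul_of_not_disjoint, smul_zero]
    obtain ⟨a, hat, has⟩ := (exists_mem_notMem_iff_ne t s).mp hts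
    exact Finset.not_disjoint_iff.mpr ⟨a, hat, by simpa [mem_coe_iff] using has⟩
  · simp

theorem mul_eq_zero_of_mem_submodule_pow {R A : Type*} [CommSemiring R] [Semiring A]
    [Algebra R A] {N : Submodule R A} {n : ℕ} {z : A}
    (hz : ∀ f : Fin n → N, z * (List.ofFn fun i => (f i : A)).prod = 0) {y : A}
    (hy : y ∈ N ^ n) : z * y = 0 := by
  rw [Submodule.pow_eq_span_pow_set] at hy
  refine (Submodule.span_le (p := LinearMap.ker (LinearMap.mulLeft R z))).mpr ?_ hy
  rintro _ hx
  obtain ⟨f, rfl⟩ := Set.mem_pow.mp hx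
  exact hz f

section wedgeFinset

variable {V : Type*} [AddCommGroup V] [Module ℂ V] {m n : ℕ}

theorem wedgeFinset_eq_prod_ofFn (f : Fin m → ExteriorAlgebra ℂ V) {S : Finset (Fin m)}
    (hS : S.card = n) : wedgeFinset f S = (List.ofFn (f ∘ S.orderEmbOfFin hS)).prod := by
  rw [wedgeFinset, ← S.listMap_orderEmbOfFin_finRange hS, List.map_map, List.ofFn_eq_map]

theorem wedgeFinset_eq_zero_of_mem {f : Fin m → ExteriorAlgebra ℂ V} {S : Finset (Fin m)}
    {a : Fin m} (ha : a ∈ S) (hfa : f a = 0) : wedgeFinset f S = 0 :=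
  List.prod_eq_zero (List.mem_map.mpr ⟨a, (Finset.mem_sort _).mpr ha, hfa⟩)

theorem sum_powersetCard_smul_mul_wedgeFinset_extend (c : Finset (Fin m) → ℤ)
    (a : ExteriorAlgebra ℂ V) {S₀ : Finset (Fin m)} (hS₀ : S₀.card = n)
    (x : Fin n → ExteriorAlgebra ℂ V) :
    ∑ S ∈ Finset.powersetCard n Finset.univ,
        c S • (a * wedgeFinset (Function.extend (S₀.orderEmbOfFin hS₀) x 0) S) =
      c S₀ • (a * (List.ofFn x).prod) := by
  have hinj := (S₀.orderEmbOfFin hS₀).injective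
  rw [Finset.sum_eq_single S₀, wedgeFinset_eq_prod_ofFn _ hS₀, Function.extend_comp hinj]
  · intro S hS hne
    obtain ⟨b, hbS, hbS₀⟩ := Finset.not_subset.mp fun hsub => hne <|
      Finset.eq_of_subset_of_card_le hsub (by rw [(Finset.mem_powersetCard_univ.mp hS), hS₀])
    rw [wedgeFinset_eq_zero_of_mem hbS, mul_zero, smul_zero]
    refine Function.extend_apply' _ _ _ fun ⟨i, hi⟩ => hbS₀ ?_
    exact hi ▸ S₀.orderEmbOfFin_mem hS₀ i
  · exact fun h => (h (Finset.mem_powersetCard_univ.mpr hS₀)).elim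

end wedgeFinset

theorem diagonal_polarSum_vanishing_iff_pow_zero_general
    {V : Type*} [AddCommGroup V] [Module ℂ V] {r m k : ℕ}
    (hr : 1 ≤ r) (hV : finrank ℂ V = r * m)
    (w : (⋀[ℂ]^r V : Submodule ℂ (ExteriorAlgebra ℂ V)))
    (hk1 : 1 ≤ k) (hkm : k ≤ m) :
    (∀ i ≤ k - 1, ∀ t : Fin m → (⋀[ℂ]^r V : Submodule ℂ (ExteriorAlgebra ℂ V)),
        (∑ S ∈ Finset.powersetCard i (Finset.univ : Finset (Fin m)),
          (Equiv.Perm.sign (sigmaPerm S) : ℤ) •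
            ((w : ExteriorAlgebra ℂ V) ^ (m - i) *
              wedgeFinset (fun a => (t a : ExteriorAlgebra ℂ V)) S)) = 0) ↔
      (w : ExteriorAlgebra ℂ V) ^ (m - k + 1) = 0 := by
  constructor
  · intro H
    have : FiniteDimensional ℂ V := .of_finrank_pos (by rw [hV]; exact Nat.mul_pos hr (by omega))
    obtain ⟨S₀, -, hS₀⟩ := Finset.exists_subset_card_eq (s := (Finset.univ : Finset (Fin m)))
      (n := k - 1) (by simp; omega)
    set e := S₀.orderEmbOfFin hS₀
    have hann (x : Fin (k - 1) → ⋀[ℂ]^r V) : (w : ExteriorAlgebra ℂ V) ^ (m - k + 1) *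
        (List.ofFn fun i => (x i : ExteriorAlgebra ℂ V)).prod = 0 := by
      have hx := H (k - 1) le_rfl (Function.extend e x 0)
      have hcoe : (fun a => ((Function.extend e x 0 a : ⋀[ℂ]^r V) : ExteriorAlgebra ℂ V)) =
          Function.extend e (fun i => (x i : ExteriorAlgebra ℂ V)) 0 :=
        funext (Function.apply_extend Subtype.val _ _)
      rwa [hcoe, show m - (k - 1) = m - k + 1 by omega,
        sum_powersetCard_smul_mul_wedgeFinset_extend, ← Units.smul_def, smul_eq_zero_iff_eq] at hx
    refine eq_zero_of_forall_mul_exteriorPower_eq_zero (finBasis ℂ V)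
      (p := r * (m - k + 1)) (q := r * (k - 1)) ?_ ?_ fun y hy => ?_
    · rw [Fintype.card_fin, hV, ← Nat.mul_add]; congr 1; omega
    · exact mul_comm r _ ▸ SetLike.pow_mem_graded _ w.2
    · exact mul_eq_zero_of_mem_submodule_pow hann (by rwa [← pow_mul])
  · intro h i hi t
    refine Finset.sum_eq_zero fun S _ => ?_
    rw [show m - i = (m - k + 1) + (k - 1 - i) by omega, pow_add, h, zero_mul, zero_mul,
      smul_zero]

theorem diagonal_polarSum_vanishing_iff_pow_zero
    {V : Type*} [AddCommGroup V] [Module ℂ V] {r m k : ℕ}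
    (hr : 1 ≤ r) (hm : 1 ≤ m) (hV : finrank ℂ V = r * m)
    (w : (⋀[ℂ]^r V : Submodule ℂ (ExteriorAlgebra ℂ V)))
    (hk1 : 1 ≤ k) (hkm : k ≤ m) :
    (∀ i ≤ k - 1, ∀ t : Fin m → (⋀[ℂ]^r V : Submodule ℂ (ExteriorAlgebra ℂ V)),
        (∑ S ∈ Finset.powersetCard i (Finset.univ : Finset (Fin m)),
          (Equiv.Perm.sign (sigmaPerm S) : ℤ) •
            ((w : ExteriorAlgebra ℂ V) ^ (m - i) *
              wedgeFinset (fun a => (t a : ExteriorAlgebra ℂ V)) S)) = 0) ↔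
      (w : ExteriorAlgebra ℂ V) ^ (m - k + 1) = 0 :=
  diagonal_polarSum_vanishing_iff_pow_zero_general hr hV w hk1 hkm
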